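/- arXiv:2605.11165 — 3 statements merged into one kernel-verified Lean document; each statement's English description precedes it below -/
import Mathlib

section
/- Fix functions f, f̄ : U → ℝ^M on a finite set U with Σ_{x∈U} ‖f̄(x) − f(x)‖₁ ≤ 2B, and suppose f has uniform margin γ > 0 on U, i.e., for every x ∈ U, the largest coordinate of f(x) exceeds every other coordinate by at least γ. Let y : U → {1,…,M} be any labeling. Then the number of points x ∈ U where argmax f̄(x) ≠ y(x) is at most (number of points where argmax f(x) ≠ y(x)) + 2B/γ. Equivalently, Err_U(f̄) ≤ Err_U(f) + 2B/(γ|U|), where Err_U(g) is the fraction of x ∈ U with argmax g(x) ≠ y(x). -/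
/-!
If the argmax `cbar x` of `f̄ x` differs from the argmax `cstar x` of `f x`, then
`f x (cstar x) - f x (cbar x) ≥ γ` while `f̄ x (cstar x) - f̄ x (cbar x) ≤ 0`, so the two
coordinates `cstar x` and `cbar x` alone already carry ℓ₁-distance at least `γ` between
`f̄ x` and `f x`. Hence at most `2B/γ` points have `cbar x ≠ cstar x`, and only these points
can be misclassified by `f̄` but not by `f`.
-/

open Finset

lemma le_sum_abs_sub_of_margin_of_le {ι : Type*} [Fintype ι] {u v : ι → ℝ} {i j : ι} {γ : ℝ}
    (hij : i ≠ j) (hmargin : γ ≤ u i - u j) (hle : v i ≤ v j) :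
    γ ≤ ∑ c, |v c - u c| := by
  classical
  calc γ ≤ |v i - u i| + |v j - u j| := by
          linarith [neg_abs_le (v i - u i), le_abs_self (v j - u j)]
    _ = ∑ c ∈ {i, j}, |v c - u c| := (sum_pair (f := fun c => |v c - u c|) hij).symm
    _ ≤ ∑ c, |v c - u c| := sum_le_univ_sum_of_nonneg fun _ => abs_nonneg _

lemma mul_card_filter_le_sum {α : Type*} (s : Finset α) (p : α → Prop) [DecidablePred p]
    {w : α → ℝ} {γ : ℝ} (hw : ∀ x ∈ s, 0 ≤ w x) (hp : ∀ x ∈ s, p x → γ ≤ w x) :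
    γ * #(s.filter p) ≤ ∑ x ∈ s, w x :=
  calc γ * #(s.filter p) = #(s.filter p) • γ := by rw [nsmul_eq_mul, mul_comm]
    _ ≤ ∑ x ∈ s.filter p, w x :=
        card_nsmul_le_sum _ _ _ fun x hx => hp x (mem_filter.1 hx).1 (mem_filter.1 hx).2
    _ ≤ ∑ x ∈ s, w x := sum_le_sum_of_subset_of_nonneg (filter_subset _ _) fun x hx _ => hw x hx

lemma card_filter_ne_le_add {α β : Type*} [DecidableEq β] (s : Finset α) (g h y : α → β) :
    #(s.filter fun x => g x ≠ y x) ≤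
      #(s.filter fun x => h x ≠ y x) + #(s.filter fun x => g x ≠ h x) := by
  classical
  refine (card_le_card fun x hx => ?_).trans (card_union_le _ _)
  simp only [mem_filter, mem_union] at hx ⊢
  by_cases hxy : h x = y x
  · exact Or.inr ⟨hx.1, fun hgh => hx.2 (hgh.trans hxy)⟩
  · exact Or.inl ⟨hx.1, hxy⟩

theorem stmt3_general {X : Type*} {M : ℕ} (U : Finset X)
    (f fbar : X → Fin M → ℝ) (y : X → Fin M) (cstar cbar : X → Fin M) (γ B : ℝ)
    (hγ : 0 < γ)
    (hdist : ∑ x ∈ U, ∑ c : Fin M, |fbar x c - f x c| ≤ 2 * B)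
    (hmargin : ∀ x ∈ U, ∀ j : Fin M, j ≠ cstar x → γ ≤ f x (cstar x) - f x j)
    (hcbar : ∀ x ∈ U, ∀ j : Fin M, fbar x j ≤ fbar x (cbar x)) :
    ((U.filter fun x => cbar x ≠ y x).card : ℝ) ≤
      ((U.filter fun x => cstar x ≠ y x).card : ℝ) + 2 * B / γ ∧
    ((U.filter fun x => cbar x ≠ y x).card : ℝ) / (U.card : ℝ) ≤
      ((U.filter fun x => cstar x ≠ y x).card : ℝ) / (U.card : ℝ)
        + 2 * B / (γ * (U.card : ℝ)) := by
  have hdisagree : γ * #(U.filter fun x => cbar x ≠ cstar x) ≤ 2 * B :=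
    (mul_card_filter_le_sum U _ (fun x _ => sum_nonneg fun _ _ => abs_nonneg _)
      fun x hx hne => le_sum_abs_sub_of_margin_of_le (Ne.symm hne)
        (hmargin x hx _ hne) (hcbar x hx _)).trans hdist
  have hcount : ((U.filter fun x => cbar x ≠ y x).card : ℝ) ≤
      ((U.filter fun x => cstar x ≠ y x).card : ℝ) + 2 * B / γ := by
    have htriangle : (#(U.filter fun x => cbar x ≠ y x) : ℝ) ≤
        #(U.filter fun x => cstar x ≠ y x) + #(U.filter fun x => cbar x ≠ cstar x) := by
      exact_mod_cast card_filter_ne_le_add U cbar cstar y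
    have hdisagree_le : (#(U.filter fun x => cbar x ≠ cstar x) : ℝ) ≤ 2 * B / γ := by
      rw [le_div_iff₀ hγ]; linarith
    linarith
  refine ⟨hcount, ?_⟩
  rw [← div_div, ← add_div]
  exact div_le_div_of_nonneg_right hcount (Nat.cast_nonneg _)

/-- if `f` has uniform margin `γ > 0` on `U` (with argmax map `cstar`),
`f̄` has argmax map `cbar`, and the aggregated ℓ₁-distance between `f̄` and `f` over `U`
is at most `2B`, then the number of mistakes of `cbar` w.r.t. labels `y` exceeds that of
`cstar` by at most `2B/γ`; equivalently `Err_U(f̄) ≤ Err_U(f) + 2B/(γ|U|)`. -/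
theorem stmt3 {X : Type*} [DecidableEq X] {M : ℕ} (U : Finset X) (hU : U.Nonempty)
    (f fbar : X → Fin M → ℝ) (y : X → Fin M) (cstar cbar : X → Fin M) (γ B : ℝ)
    (hγ : 0 < γ)
    (hdist : ∑ x ∈ U, ∑ c : Fin M, |fbar x c - f x c| ≤ 2 * B)
    (hmargin : ∀ x ∈ U, ∀ j : Fin M, j ≠ cstar x → γ ≤ f x (cstar x) - f x j)
    (hcbar : ∀ x ∈ U, ∀ j : Fin M, fbar x j ≤ fbar x (cbar x)) :
    ((U.filter fun x => cbar x ≠ y x).card : ℝ) ≤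
      ((U.filter fun x => cstar x ≠ y x).card : ℝ) + 2 * B / γ ∧
    ((U.filter fun x => cbar x ≠ y x).card : ℝ) / (U.card : ℝ) ≤
      ((U.filter fun x => cstar x ≠ y x).card : ℝ) / (U.card : ℝ)
        + 2 * B / (γ * (U.card : ℝ)) :=
  stmt3_general U f fbar y cstar cbar γ B hγ hdist hmargin hcbar
end

section
/- Let Φ : ℝ^d → ℝ be twice continuously differentiable and μ-strongly convex (∇²Φ(θ) ⪰ μI with μ > 0), with minimizer θ₁ (so ∇Φ(θ₁) = 0). Let Ψ : ℝ^d → ℝ be differentiable with L-Lipschitz gradient where 0 < L < μ, and suppose θ̂ satisfies ∇Φ(θ̂) + ∇Ψ(θ̂) = 0. Then ‖θ̂ − θ₁‖ ≤ ‖∇Ψ(θ₁)‖ / (μ − L). -/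
/-! Testing strong monotonicity of `gradΦ` against `δ = θ̂ - θ₁` and substituting
`gradΦ θ̂ - gradΦ θ₁ = (gradΨ θ₁ - gradΨ θ̂) - gradΨ θ₁` gives
`μ ‖δ‖² ≤ L ‖δ‖² + ‖gradΨ θ₁‖ ‖δ‖` by Cauchy–Schwarz and the Lipschitz bound;
cancelling one factor `‖δ‖` leaves `(μ - L) ‖δ‖ ≤ ‖gradΨ θ₁‖`. -/

section

variable {E : Type*} [NormedAddCommGroup E] [InnerProductSpace ℝ E]

theorem sub_mul_norm_sq_le_of_add_eq_zero {F G : E → E} {μ L : ℝ} {x₁ x : E}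
    (hF : ∀ y y', μ * ‖y - y'‖ ^ 2 ≤ inner ℝ (F y - F y') (y - y'))
    (hG : ∀ y y', ‖G y - G y'‖ ≤ L * ‖y - y'‖)
    (hx₁ : F x₁ = 0) (hx : F x + G x = 0) :
    (μ - L) * ‖x - x₁‖ ^ 2 ≤ ‖G x₁‖ * ‖x - x₁‖ := by
  have hsplit : F x - F x₁ = (G x₁ - G x) - G x₁ := by
    rw [hx₁, eq_neg_of_add_eq_zero_left hx]
    abel
  have hlip : inner ℝ (G x₁ - G x) (x - x₁) ≤ L * ‖x - x₁‖ ^ 2 :=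
    calc inner ℝ (G x₁ - G x) (x - x₁) ≤ ‖G x₁ - G x‖ * ‖x - x₁‖ := real_inner_le_norm _ _
      _ ≤ L * ‖x₁ - x‖ * ‖x - x₁‖ := by gcongr; exact hG x₁ x
      _ = L * ‖x - x₁‖ ^ 2 := by rw [norm_sub_rev x₁ x]; ring
  have hshift : -inner ℝ (G x₁) (x - x₁) ≤ ‖G x₁‖ * ‖x - x₁‖ :=
    (neg_le_abs _).trans (abs_real_inner_le_norm _ _)
  have hmono := hF x x₁
  rw [hsplit, inner_sub_left] at hmono
  linarith

theorem sub_mul_norm_le_of_add_eq_zero {F G : E → E} {μ L : ℝ} {x₁ x : E}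
    (hF : ∀ y y', μ * ‖y - y'‖ ^ 2 ≤ inner ℝ (F y - F y') (y - y'))
    (hG : ∀ y y', ‖G y - G y'‖ ≤ L * ‖y - y'‖)
    (hx₁ : F x₁ = 0) (hx : F x + G x = 0) :
    (μ - L) * ‖x - x₁‖ ≤ ‖G x₁‖ := by
  have hsq := sub_mul_norm_sq_le_of_add_eq_zero hF hG hx₁ hx
  rcases (norm_nonneg (x - x₁)).eq_or_lt with h0 | hpos
  · rw [← h0, mul_zero]
    exact norm_nonneg _
  · rw [pow_two, ← mul_assoc] at hsq
    exact le_of_mul_le_mul_right hsq hpos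

end

theorem stmt9_general {d : ℕ} (gradΦ gradΨ : EuclideanSpace ℝ (Fin d) → EuclideanSpace ℝ (Fin d))
    (μ L : ℝ) (hLμ : L < μ)
    (θ₁ θhat : EuclideanSpace ℝ (Fin d))
    (hstrong : ∀ θ θ' : EuclideanSpace ℝ (Fin d),
      μ * ‖θ - θ'‖ ^ 2 ≤ inner ℝ (gradΦ θ - gradΦ θ') (θ - θ'))
    (hlip : ∀ θ θ' : EuclideanSpace ℝ (Fin d), ‖gradΨ θ - gradΨ θ'‖ ≤ L * ‖θ - θ'‖)
    (hθ₁ : gradΦ θ₁ = 0)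
    (hθhat : gradΦ θhat + gradΨ θhat = 0) :
    ‖θhat - θ₁‖ ≤ ‖gradΨ θ₁‖ / (μ - L) := by
  rw [le_div_iff₀ (sub_pos.mpr hLμ), mul_comm]
  exact sub_mul_norm_le_of_add_eq_zero hstrong hlip hθ₁ hθhat

/-- stability under objective shift. If `gradΦ` is the gradient of a
`μ`-strongly convex function (strongly monotone), `θ₁` its critical point,
`gradΨ` is `L`-Lipschitz with `0 < L < μ`, and `θ̂` satisfies
`gradΦ(θ̂) + gradΨ(θ̂) = 0`, then `‖θ̂ − θ₁‖ ≤ ‖gradΨ(θ₁)‖/(μ − L)`. -/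
theorem stmt9 {d : ℕ} (gradΦ gradΨ : EuclideanSpace ℝ (Fin d) → EuclideanSpace ℝ (Fin d))
    (μ L : ℝ) (hL : 0 < L) (hLμ : L < μ)
    (θ₁ θhat : EuclideanSpace ℝ (Fin d))
    (hstrong : ∀ θ θ' : EuclideanSpace ℝ (Fin d),
      μ * ‖θ - θ'‖ ^ 2 ≤ inner ℝ (gradΦ θ - gradΦ θ') (θ - θ'))
    (hlip : ∀ θ θ' : EuclideanSpace ℝ (Fin d), ‖gradΨ θ - gradΨ θ'‖ ≤ L * ‖θ - θ'‖)
    (hθ₁ : gradΦ θ₁ = 0)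
    (hθhat : gradΦ θhat + gradΨ θhat = 0) :
    ‖θhat - θ₁‖ ≤ ‖gradΨ θ₁‖ / (μ - L) :=
  stmt9_general gradΦ gradΨ μ L hLμ θ₁ θhat hstrong hlip hθ₁ hθhat
end

section
/- Let Φ be μ-strongly convex with minimizer θ₁ and let Ψ have L-Lipschitz gradient with 0 < L < μ and ‖∇Ψ(θ₁)‖ ≤ τ. Let θ* minimize a μ-strongly convex function Φ₀ with sup_θ |Φ(θ) − Φ₀(θ)| ≤ ε. If θ̂ is a critical point of Φ + Ψ, then ‖θ̂ − θ*‖ ≤ τ/(μ − L) + √(4ε/μ). -/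
/-!
At the critical point `θ̂` of `Φ + Ψ` we have `∇Φ(θ̂) = -∇Ψ(θ̂)`, so strong monotonicity of `∇Φ`
against the Lipschitz bound on `∇Ψ` gives `(μ - L) ‖θ̂ - θ₁‖ ≤ ‖∇Ψ(θ₁)‖`. Independently,
`θ₁` minimizes a function `ε`-close to `Φ₀`, so `Φ₀(θ₁) - Φ₀(θ*) ≤ 2ε`, and the quadratic growth of
`Φ₀` around `θ*` gives `μ ‖θ₁ - θ*‖² ≤ 4ε`. The triangle inequality combines the two bounds.
-/

section CriticalPointShift

variable {E : Type*} [NormedAddCommGroup E] [InnerProductSpace ℝ E]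

theorem sub_mul_norm_sub_le_of_strongMonotone_add_lipschitz {g h : E → E} {μ L : ℝ}
    (hg : ∀ x y, μ * ‖x - y‖ ^ 2 ≤ inner ℝ (g x - g y) (x - y))
    (hh : ∀ x y, ‖h x - h y‖ ≤ L * ‖x - y‖)
    {x₁ x : E} (hx₁ : g x₁ = 0) (hx : g x + h x = 0) :
    (μ - L) * ‖x - x₁‖ ≤ ‖h x₁‖ := by
  set v := x - x₁
  have hgx : g x - g x₁ = (h x₁ - h x) - h x₁ := by
    rw [hx₁, eq_neg_of_add_eq_zero_left hx]; abel
  have hquad : (μ - L) * ‖v‖ * ‖v‖ ≤ ‖h x₁‖ * ‖v‖ :=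
    calc (μ - L) * ‖v‖ * ‖v‖ = μ * ‖v‖ ^ 2 - L * ‖v‖ * ‖v‖ := by ring
      _ ≤ inner ℝ (h x₁ - h x) v - inner ℝ (h x₁) v - L * ‖v‖ * ‖v‖ := by
          rw [← inner_sub_left, ← hgx]; gcongr; exact hg x x₁
      _ ≤ ‖h x₁ - h x‖ * ‖v‖ + ‖h x₁‖ * ‖v‖ - L * ‖v‖ * ‖v‖ := by
          have h₁ := real_inner_le_norm (h x₁ - h x) v
          have h₂ := neg_le_of_abs_le (abs_real_inner_le_norm (h x₁) v)
          linarith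
      _ ≤ ‖h x₁‖ * ‖v‖ := by
          have hlip : ‖h x₁ - h x‖ ≤ L * ‖v‖ := by rw [norm_sub_rev]; exact hh x x₁
          linarith [mul_le_mul_of_nonneg_right hlip (norm_nonneg v)]
  rcases (norm_nonneg v).eq_or_lt with hv | hv
  · rw [← hv, mul_zero]; exact norm_nonneg _
  · exact le_of_mul_le_mul_right hquad hv

theorem norm_sub_le_div_of_strongMonotone_add_lipschitz {g h : E → E} {μ L : ℝ} (hLμ : L < μ)
    (hg : ∀ x y, μ * ‖x - y‖ ^ 2 ≤ inner ℝ (g x - g y) (x - y))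
    (hh : ∀ x y, ‖h x - h y‖ ≤ L * ‖x - y‖)
    {x₁ x : E} (hx₁ : g x₁ = 0) (hx : g x + h x = 0) :
    ‖x - x₁‖ ≤ ‖h x₁‖ / (μ - L) := by
  rw [le_div_iff₀ (sub_pos.mpr hLμ), mul_comm]
  exact sub_mul_norm_sub_le_of_strongMonotone_add_lipschitz hg hh hx₁ hx

end CriticalPointShift

section MinimizerStability

variable {E : Type*} [SeminormedAddCommGroup E]

theorem mul_norm_sub_sq_le_of_abs_sub_le {f f₀ : E → ℝ} {μ ε : ℝ} {x₁ xstar : E}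
    (hf₀ : ∀ x, f₀ xstar + μ / 2 * ‖x - xstar‖ ^ 2 ≤ f₀ x)
    (happrox : ∀ x, |f x - f₀ x| ≤ ε) (hx₁ : ∀ x, f x₁ ≤ f x) :
    μ * ‖x₁ - xstar‖ ^ 2 ≤ 4 * ε := by
  have h₁ := abs_le.mp (happrox x₁)
  have h₂ := abs_le.mp (happrox xstar)
  linarith [hf₀ x₁, hx₁ xstar]

theorem norm_sub_le_sqrt_of_abs_sub_le {f f₀ : E → ℝ} {μ ε : ℝ} (hμ : 0 < μ) {x₁ xstar : E}
    (hf₀ : ∀ x, f₀ xstar + μ / 2 * ‖x - xstar‖ ^ 2 ≤ f₀ x)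
    (happrox : ∀ x, |f x - f₀ x| ≤ ε) (hx₁ : ∀ x, f x₁ ≤ f x) :
    ‖x₁ - xstar‖ ≤ Real.sqrt (4 * ε / μ) := by
  refine Real.le_sqrt_of_sq_le ?_
  rw [le_div_iff₀ hμ, mul_comm]
  exact mul_norm_sub_sq_le_of_abs_sub_le hf₀ happrox hx₁

end MinimizerStability

theorem stmt11_general {d : ℕ} (Φ Φ₀ : EuclideanSpace ℝ (Fin d) → ℝ)
    (gradΦ gradΨ : EuclideanSpace ℝ (Fin d) → EuclideanSpace ℝ (Fin d))
    (μ L τ ε : ℝ) (hL : 0 < L) (hLμ : L < μ)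
    (θ₁ θstar θhat : EuclideanSpace ℝ (Fin d))
    (hstrong : ∀ θ θ' : EuclideanSpace ℝ (Fin d),
      μ * ‖θ - θ'‖ ^ 2 ≤ inner ℝ (gradΦ θ - gradΦ θ') (θ - θ'))
    (hlip : ∀ θ θ' : EuclideanSpace ℝ (Fin d), ‖gradΨ θ - gradΨ θ'‖ ≤ L * ‖θ - θ'‖)
    (hθ₁crit : gradΦ θ₁ = 0)
    (hθ₁min : ∀ θ, Φ θ₁ ≤ Φ θ)
    (hτbound : ‖gradΨ θ₁‖ ≤ τ)
    (hΦ₀sc : ∀ θ, Φ₀ θstar + μ / 2 * ‖θ - θstar‖ ^ 2 ≤ Φ₀ θ)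
    (happrox : ∀ θ, |Φ θ - Φ₀ θ| ≤ ε)
    (hθhat : gradΦ θhat + gradΨ θhat = 0) :
    ‖θhat - θstar‖ ≤ τ / (μ - L) + Real.sqrt (4 * ε / μ) := by
  have hshift : ‖θhat - θ₁‖ ≤ τ / (μ - L) :=
    (norm_sub_le_div_of_strongMonotone_add_lipschitz hLμ hstrong hlip hθ₁crit hθhat).trans
      (div_le_div_of_nonneg_right hτbound (sub_pos.mpr hLμ).le)
  have happroxMin : ‖θ₁ - θstar‖ ≤ Real.sqrt (4 * ε / μ) :=
    norm_sub_le_sqrt_of_abs_sub_le (hL.trans hLμ) hΦ₀sc happrox hθ₁min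
  calc ‖θhat - θstar‖ ≤ ‖θhat - θ₁‖ + ‖θ₁ - θstar‖ := norm_sub_le_norm_sub_add_norm_sub _ _ _
    _ ≤ τ / (μ - L) + Real.sqrt (4 * ε / μ) := add_le_add hshift happroxMin

/-- combined stability bound. With `Φ` `μ`-strongly convex
(gradient strongly monotone, critical point `θ₁` which minimizes `Φ`),
`Ψ` with `L`-Lipschitz gradient, `0 < L < μ`, `‖∇Ψ(θ₁)‖ ≤ τ`, a `μ`-strongly
convex `Φ₀` with minimizer `θ*` and `sup_θ |Φ(θ) − Φ₀(θ)| ≤ ε`, any critical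
point `θ̂` of `Φ + Ψ` satisfies `‖θ̂ − θ*‖ ≤ τ/(μ − L) + √(4ε/μ)`. -/
theorem stmt11 {d : ℕ} (Φ Φ₀ : EuclideanSpace ℝ (Fin d) → ℝ)
    (gradΦ gradΨ : EuclideanSpace ℝ (Fin d) → EuclideanSpace ℝ (Fin d))
    (μ L τ ε : ℝ) (hL : 0 < L) (hLμ : L < μ) (hτ : 0 ≤ τ) (hε : 0 ≤ ε)
    (θ₁ θstar θhat : EuclideanSpace ℝ (Fin d))
    (hgrad : ∀ θ, HasGradientAt Φ (gradΦ θ) θ)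
    (hstrong : ∀ θ θ' : EuclideanSpace ℝ (Fin d),
      μ * ‖θ - θ'‖ ^ 2 ≤ inner ℝ (gradΦ θ - gradΦ θ') (θ - θ'))
    (hlip : ∀ θ θ' : EuclideanSpace ℝ (Fin d), ‖gradΨ θ - gradΨ θ'‖ ≤ L * ‖θ - θ'‖)
    (hθ₁crit : gradΦ θ₁ = 0)
    (hθ₁min : ∀ θ, Φ θ₁ ≤ Φ θ)
    (hτbound : ‖gradΨ θ₁‖ ≤ τ)
    (hΦ₀sc : ∀ θ, Φ₀ θstar + μ / 2 * ‖θ - θstar‖ ^ 2 ≤ Φ₀ θ)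
    (happrox : ∀ θ, |Φ θ - Φ₀ θ| ≤ ε)
    (hθhat : gradΦ θhat + gradΨ θhat = 0) :
    ‖θhat - θstar‖ ≤ τ / (μ - L) + Real.sqrt (4 * ε / μ) :=
  stmt11_general Φ Φ₀ gradΦ gradΨ μ L τ ε hL hLμ θ₁ θstar θhat hstrong hlip hθ₁crit hθ₁min hτbound
    hΦ₀sc happrox hθhat
end
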